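/- arXiv:1907.06782 — 4 statements merged into one kernel-verified Lean document; each statement's English description precedes it below -/
import Mathlib

section
/- Let a be a real number with |a| < 1. Then for every integer n ≥ 1, Σ_{i,j,k,l=1}^{n} Σ_{r=1}^{min(i,j,k,l)} a^{2(i+j+k+l−4r)} ≤ 24 n / ((1 − a⁸)(1 − a²)³). -/
private def gAux (b : ℝ) (r x : ℕ) : ℝ := if r ≤ x then b ^ (x - r) else 0

private lemma gAux_nonneg {b : ℝ} (hb : 0 ≤ b) (r x : ℕ) : 0 ≤ gAux b r x := by
  unfold gAux; split
  · exact pow_nonneg hb _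
  · exact le_refl 0

/-- The combinatorial core of the contraction bounds: for `|a| < 1` and `n ≥ 1`,
`Σ_{i,j,k,l=1}^n Σ_{r=1}^{min(i,j,k,l)} a^{2(i+j+k+l−4r)} ≤ 24 n / ((1−a⁸)(1−a²)³)`. -/
theorem stmt_11 (a : ℝ) (ha : |a| < 1) :
    ∀ n : ℕ, 1 ≤ n →
      ∑ i ∈ Finset.Icc 1 n, ∑ j ∈ Finset.Icc 1 n, ∑ k ∈ Finset.Icc 1 n, ∑ l ∈ Finset.Icc 1 n,
          ∑ r ∈ Finset.Icc 1 (min (min i j) (min k l)),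
            a ^ (2 * (i + j + k + l - 4 * r)) ≤
        24 * n / ((1 - a ^ 8) * (1 - a ^ 2) ^ 3) := by
  intro n hn
  have ha' := abs_lt.mp ha
  set b : ℝ := a ^ 2 with hbdef
  have hb0 : 0 ≤ b := sq_nonneg a
  have hb1 : b < 1 := by nlinarith [mul_pos (by linarith : (0:ℝ) < 1 - a) (by linarith : (0:ℝ) < 1 + a)]
  have hcb : 0 < 1 - b := by linarith
  set I : Finset ℕ := Finset.Icc 1 n with hI
  set g : ℕ → ℕ → ℝ := gAux b with hg
  -- geometric sum bound
  have hgeom : ∀ m : ℕ, ∑ t ∈ Finset.range m, b ^ t ≤ (1 - b)⁻¹ := by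
    intro m
    rw [geom_sum_eq (ne_of_lt hb1) m]
    have : (b ^ m - 1) / (b - 1) = (1 - b ^ m) / (1 - b) := by
      rw [← neg_div_neg_eq]; ring_nf
    rw [this, inv_eq_one_div, div_le_div_iff₀ hcb hcb]
    nlinarith [pow_nonneg hb0 m]
  -- row sums of g are bounded
  have hrow : ∀ r ∈ I, ∑ x ∈ I, g r x ≤ (1 - b)⁻¹ := by
    intro r hr
    rw [Finset.mem_Icc] at hr
    have hfe : ∑ x ∈ I, g r x = ∑ x ∈ Finset.Icc r n, b ^ (x - r) := by
      rw [hg, hI]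
      rw [show (Finset.Icc r n) = (Finset.Icc 1 n).filter (fun x => r ≤ x) by
        ext x; simp [Finset.mem_Icc, Finset.mem_filter]; omega]
      rw [Finset.sum_filter]
      rfl
    rw [hfe, ← Finset.Ico_add_one_right_eq_Icc, Finset.sum_Ico_eq_sum_range]
    calc ∑ t ∈ Finset.range (n + 1 - r), b ^ (r + t - r)
        = ∑ t ∈ Finset.range (n + 1 - r), b ^ t := by
          refine Finset.sum_congr rfl fun t _ => by congr 1; omega
      _ ≤ (1 - b)⁻¹ := hgeom _
  have hrow0 : ∀ r : ℕ, 0 ≤ ∑ x ∈ I, g r x :=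
    fun r => Finset.sum_nonneg fun x _ => gAux_nonneg hb0 r x
  -- rewrite the inner sum
  have hterm : ∀ i ∈ I, ∀ j ∈ I, ∀ k ∈ I, ∀ l ∈ I,
      (∑ r ∈ Finset.Icc 1 (min (min i j) (min k l)), a ^ (2 * (i + j + k + l - 4 * r)))
        = ∑ r ∈ I, g r i * g r j * g r k * g r l := by
    intro i hi j hj k hk l hl
    rw [Finset.mem_Icc] at hi hj hk hl
    have hsub : Finset.Icc 1 (min (min i j) (min k l)) ⊆ I := by
      rw [hI]; apply Finset.Icc_subset_Icc_right; omega
    rw [← Finset.sum_subset hsub]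
    · refine Finset.sum_congr rfl fun r hr => ?_
      rw [Finset.mem_Icc] at hr
      have hri : r ≤ i := by omega
      have hrj : r ≤ j := by omega
      have hrk : r ≤ k := by omega
      have hrl : r ≤ l := by omega
      rw [hg]
      simp only [gAux, if_pos hri, if_pos hrj, if_pos hrk, if_pos hrl]
      rw [← pow_add, ← pow_add, ← pow_add, hbdef, ← pow_mul]
      congr 1
      omega
    · intro r hrI hr
      rw [Finset.mem_Icc] at hrI
      rw [Finset.mem_Icc] at hr
      have : i < r ∨ j < r ∨ k < r ∨ l < r := by omega
      have hz : ∀ x : ℕ, x < r → g r x = 0 := by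
        intro x hx; rw [hg]; exact if_neg (by omega)
      rcases this with h | h | h | h <;> rw [hz _ h] <;> ring
  calc ∑ i ∈ I, ∑ j ∈ I, ∑ k ∈ I, ∑ l ∈ I,
          ∑ r ∈ Finset.Icc 1 (min (min i j) (min k l)), a ^ (2 * (i + j + k + l - 4 * r))
      = ∑ i ∈ I, ∑ j ∈ I, ∑ k ∈ I, ∑ l ∈ I, ∑ r ∈ I, g r i * g r j * g r k * g r l := by
        refine Finset.sum_congr rfl fun i hi => Finset.sum_congr rfl fun j hj =>
          Finset.sum_congr rfl fun k hk => Finset.sum_congr rfl fun l hl => ?_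
        exact hterm i hi j hj k hk l hl
    _ = ∑ i ∈ I, ∑ j ∈ I, ∑ k ∈ I, ∑ r ∈ I, ∑ l ∈ I, g r i * g r j * g r k * g r l := by
        refine Finset.sum_congr rfl fun i _ => Finset.sum_congr rfl fun j _ =>
          Finset.sum_congr rfl fun k _ => Finset.sum_comm
    _ = ∑ i ∈ I, ∑ j ∈ I, ∑ r ∈ I, ∑ k ∈ I, ∑ l ∈ I, g r i * g r j * g r k * g r l := by
        refine Finset.sum_congr rfl fun i _ => Finset.sum_congr rfl fun j _ => Finset.sum_comm
    _ = ∑ i ∈ I, ∑ r ∈ I, ∑ j ∈ I, ∑ k ∈ I, ∑ l ∈ I, g r i * g r j * g r k * g r l := by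
        refine Finset.sum_congr rfl fun i _ => Finset.sum_comm
    _ = ∑ r ∈ I, ∑ i ∈ I, ∑ j ∈ I, ∑ k ∈ I, ∑ l ∈ I, g r i * g r j * g r k * g r l :=
        Finset.sum_comm
    _ = ∑ r ∈ I, (∑ x ∈ I, g r x) * (∑ x ∈ I, g r x) * (∑ x ∈ I, g r x) * (∑ x ∈ I, g r x) := by
        refine Finset.sum_congr rfl fun r _ => ?_
        simp only [Finset.sum_mul, Finset.mul_sum]
        exact Finset.sum_congr rfl fun _ _ => Finset.sum_congr rfl fun _ _ =>
          Finset.sum_congr rfl fun _ _ => Finset.sum_congr rfl fun _ _ => by ring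
    _ ≤ ∑ r ∈ I, (1 - b)⁻¹ ^ 4 := by
        refine Finset.sum_le_sum fun r hr => ?_
        have h1 := hrow r hr
        have h0 := hrow0 r
        calc (∑ x ∈ I, g r x) * (∑ x ∈ I, g r x) * (∑ x ∈ I, g r x) * (∑ x ∈ I, g r x)
            = (∑ x ∈ I, g r x) ^ 4 := by ring
          _ ≤ (1 - b)⁻¹ ^ 4 := pow_le_pow_left₀ h0 h1 4
    _ = n * (1 - b)⁻¹ ^ 4 := by
        rw [Finset.sum_const, hI, Nat.card_Icc, nsmul_eq_mul]
        norm_num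
    _ ≤ 24 * n / ((1 - a ^ 8) * (1 - a ^ 2) ^ 3) := by
        have h8 : a ^ 8 < 1 := by
          have : b ^ 4 < 1 := pow_lt_one₀ hb0 hb1 (by norm_num)
          calc a ^ 8 = b ^ 4 := by rw [hbdef, ← pow_mul]
            _ < 1 := this
        have h80 : 0 ≤ a ^ 8 := by positivity
        have hD : 0 < (1 - a ^ 8) * (1 - a ^ 2) ^ 3 := by
          apply mul_pos (by linarith)
          exact pow_pos hcb 3
        have hc : 0 < 1 - a ^ 2 := by rw [← hbdef]; exact hcb
        have h2 : a ^ 2 ≤ 1 := by rw [← hbdef]; exact hb1.le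
        have h4 : a ^ 4 ≤ 1 := by
          calc a ^ 4 = b ^ 2 := by rw [hbdef, ← pow_mul]
            _ ≤ 1 := pow_le_one₀ hb0 hb1.le
        have h6 : a ^ 6 ≤ 1 := by
          calc a ^ 6 = b ^ 3 := by rw [hbdef, ← pow_mul]
            _ ≤ 1 := pow_le_one₀ hb0 hb1.le
        have h23 : 0 ≤ 23 - 24 * a ^ 2 + a ^ 8 := by
          nlinarith [mul_nonneg hc.le (by linarith : (0:ℝ) ≤ 23 - a ^ 2 - a ^ 4 - a ^ 6)]
        have hkey : (1 - b)⁻¹ ^ 4 ≤ 24 / ((1 - a ^ 8) * (1 - a ^ 2) ^ 3) := by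
          rw [inv_pow, inv_eq_one_div, div_le_div_iff₀ (pow_pos hcb 4) hD, hbdef]
          nlinarith [mul_nonneg (pow_nonneg hc.le 3) h23]
        calc (n : ℝ) * (1 - b)⁻¹ ^ 4 ≤ n * (24 / ((1 - a ^ 8) * (1 - a ^ 2) ^ 3)) :=
              mul_le_mul_of_nonneg_left hkey (Nat.cast_nonneg n)
          _ = 24 * n / ((1 - a ^ 8) * (1 - a ^ 2) ^ 3) := by ring
end

section
/- For every n ≥ 1, (1/n²) · Σ_{i,j,k,l=1}^{n} ⟨f_i, f_j⟩_H · ⟨f_k, f_l⟩_H · ⟨f_i, f_k⟩_H · ⟨f_j, f_l⟩_H ≤ 24 S₂⁴ / (n (1 − a²)⁷). (This quantity dominates the squared contraction norm ‖g_{4,n} ⊗₂ g_{4,n}‖²_{L²}, yielding the bound C_{4,2}/√n of the paper.) -/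
/-!
Write `w k = ∑' δ, σ δ • e k δ`. The `w k` are pairwise orthogonal with `⟪w k, w k⟫ ≤ S₂`, and
`f i = ∑_{k ≤ i} a ^ (i - k) • w k`, so `|⟪f i, f j⟫| ≤ C |a| ^ |i - j|` with `C = S₂ / (1 - a²)`.
Since the inner product is symmetric, the four-fold sum is `∑_{j,k} (∑_i ⟪f i, f j⟫ ⟪f i, f k⟫)²`.
Splitting the range of `i` at `j` and `k`, the inner sum is at most `C² |a| ^ d (d + c)` with
`d = |j - k|` and `c = 1 + 2 / (1 - a²)`; summing the squares over `k` costs at most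
`2 ∑_{d ≥ 0} a ^ (2d) (d + c)² = 2 (9 + a²) / (1 - a²)³`, which gives `20 n S₂⁴ / (1 - a²)⁷`.
-/

open Finset
open scoped RealInnerProductSpace

theorem Finset.sum_comp_le_of_injOn {α : Type*} {φ : ℕ → ℝ} {M : ℝ} (hφ : ∀ t, 0 ≤ φ t)
    (hM : ∀ N, ∑ t ∈ range N, φ t ≤ M) {g : α → ℕ} {S : Finset α} (hg : Set.InjOn g S) :
    ∑ x ∈ S, φ (g x) ≤ M := by
  classical
  obtain ⟨N, hN⟩ := (S.image g).exists_nat_subset_range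
  rw [← sum_image hg]
  exact (sum_le_sum_of_subset_of_nonneg hN fun t _ _ => hφ t).trans (hM N)

theorem Finset.sum_pow_comp_le_of_injOn {α : Type*} {s : ℝ} (hs0 : 0 ≤ s) (hs1 : s < 1)
    {g : α → ℕ} {S : Finset α} (hg : Set.InjOn g S) : ∑ x ∈ S, s ^ g x ≤ 1 / (1 - s) :=
  sum_comp_le_of_injOn (fun t => pow_nonneg hs0 t)
    (fun N => by simpa [← range_eq_Ico] using geom_sum_Ico_le_of_lt_one (m := 0) (n := N) hs0 hs1)
    hg

theorem Finset.sum_comp_dist_le {φ : ℕ → ℝ} {M : ℝ} (hφ : ∀ t, 0 ≤ φ t)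
    (hM : ∀ N, ∑ t ∈ range N, φ t ≤ M) (S : Finset ℕ) (j : ℕ) :
    ∑ k ∈ S, φ (Nat.dist j k) ≤ 2 * M := by
  rw [← sum_filter_add_sum_filter_not S (· ≤ j), two_mul]
  refine add_le_add (sum_comp_le_of_injOn hφ hM ?_) (sum_comp_le_of_injOn hφ hM ?_) <;>
  · intro x hx y hy hxy
    simp only [coe_filter, Set.mem_ofPred_eq] at hx hy
    unfold Nat.dist at hxy
    omega

/-- The value of `∑_{d ≥ 0} s ^ d * (d + c) ^ 2` for `|s| < 1`. -/
noncomputable def geomQuadSum (s c : ℝ) : ℝ :=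
  (c ^ 2 * (1 - s) ^ 2 + 2 * c * s * (1 - s) + s * (1 + s)) / (1 - s) ^ 3

theorem geomQuadSum_nonneg {s c : ℝ} (hs0 : 0 ≤ s) (hs1 : s < 1) (hc : 0 ≤ c) :
    0 ≤ geomQuadSum s c := by
  have h : 0 < 1 - s := by linarith
  unfold geomQuadSum
  positivity

theorem geomQuadSum_eq {s : ℝ} (hs : s ≠ 1) (x : ℝ) :
    geomQuadSum s x = x ^ 2 + s * geomQuadSum s (x + 1) := by
  have h : 1 - s ≠ 0 := sub_ne_zero.mpr hs.symm
  unfold geomQuadSum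
  field_simp
  ring

theorem sum_range_pow_mul_add_sq_add {s : ℝ} (hs : s ≠ 1) (c : ℝ) (N : ℕ) :
    ∑ d ∈ range N, s ^ d * ((d : ℝ) + c) ^ 2 + s ^ N * geomQuadSum s (c + N) =
      geomQuadSum s c := by
  induction N with
  | zero => simp
  | succ N ih =>
    rw [sum_range_succ, ← ih, add_assoc, geomQuadSum_eq hs (c + N)]
    congr 1
    push_cast
    rw [add_assoc c]
    ring

theorem sum_range_pow_mul_add_sq_le {s c : ℝ} (hs0 : 0 ≤ s) (hs1 : s < 1) (hc : 0 ≤ c) (N : ℕ) :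
    ∑ d ∈ range N, s ^ d * ((d : ℝ) + c) ^ 2 ≤ geomQuadSum s c := by
  rw [← sum_range_pow_mul_add_sq_add hs1.ne c N, le_add_iff_nonneg_right]
  exact mul_nonneg (pow_nonneg hs0 N) (geomQuadSum_nonneg hs0 hs1 (by positivity))

theorem sum_pow_dist_mul_pow_dist_le {r : ℝ} (hr0 : 0 ≤ r) (hr1 : r < 1) (I : Finset ℕ)
    (j k : ℕ) :
    ∑ i ∈ I, r ^ Nat.dist i j * r ^ Nat.dist i k ≤
      r ^ Nat.dist j k * (Nat.dist j k + 1 + 2 / (1 - r ^ 2)) := by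
  wlog hjk : j ≤ k generalizing j k
  · simpa only [mul_comm (r ^ Nat.dist _ j), Nat.dist_comm k j] using this k j (by omega)
  set s := r ^ 2
  have hs0 : 0 ≤ s := by positivity
  have hs1 : s < 1 := pow_lt_one₀ hr0 hr1 two_ne_zero
  have hd : Nat.dist j k = k - j := by unfold Nat.dist; omega
  have hsplit : ∀ i, r ^ Nat.dist i j * r ^ Nat.dist i k = r ^ (k - j) *
      ((if i < j then s ^ (j - i) else 0) + (if i ∈ Icc j k then 1 else 0) +
        (if k < i then s ^ (i - k) else 0)) := by
    intro i
    simp only [s, ← pow_mul, ← pow_add, mem_Icc]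
    split_ifs <;> first
      | (exfalso; omega)
      | (simp only [add_zero, zero_add, mul_one, ← pow_add]; congr 1; unfold Nat.dist; omega)
  have hbelow : ∑ i ∈ I with i < j, s ^ (j - i) ≤ 1 / (1 - s) :=
    sum_pow_comp_le_of_injOn hs0 hs1 fun x hx y hy hxy => by
      simp only [coe_filter, Set.mem_ofPred_eq] at hx hy hxy
      omega
  have habove : ∑ i ∈ I with k < i, s ^ (i - k) ≤ 1 / (1 - s) :=
    sum_pow_comp_le_of_injOn hs0 hs1 fun x hx y hy hxy => by
      simp only [coe_filter, Set.mem_ofPred_eq] at hx hy hxy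
      omega
  have hbetween : ∑ i ∈ I with i ∈ Icc j k, (1 : ℝ) ≤ (k - j : ℕ) + 1 := by
    rw [sum_const, nsmul_one]
    have h := card_le_card (s := I.filter (· ∈ Icc j k)) fun x hx => (mem_filter.1 hx).2
    rw [Nat.card_Icc] at h
    exact_mod_cast h.trans_eq (by omega)
  rw [sum_congr rfl fun i _ => hsplit i, ← mul_sum, sum_add_distrib, sum_add_distrib,
    ← sum_filter, ← sum_filter, ← sum_filter, hd]
  refine mul_le_mul_of_nonneg_left ?_ (pow_nonneg hr0 _)
  linarith [show 2 / (1 - s) = 1 / (1 - s) + 1 / (1 - s) by ring]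

theorem sum_sq_sum_mul_le_of_abs_le {P : ℕ → ℕ → ℝ} {C r : ℝ} (hr0 : 0 ≤ r) (hr1 : r < 1)
    (hP : ∀ i j, |P i j| ≤ C * r ^ Nat.dist i j) (I : Finset ℕ) :
    ∑ j ∈ I, ∑ k ∈ I, (∑ i ∈ I, P i j * P i k) ^ 2 ≤ 20 * #I * C ^ 4 / (1 - r ^ 2) ^ 3 := by
  set s := r ^ 2
  have hs0 : 0 ≤ s := by positivity
  have hs1 : s < 1 := pow_lt_one₀ hr0 hr1 two_ne_zero
  have h1s : 0 < 1 - s := by linarith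
  set c := 1 + 2 / (1 - s)
  have hc : 0 ≤ c := by positivity
  have hB : ∀ j k, |∑ i ∈ I, P i j * P i k| ≤ C ^ 2 * (r ^ Nat.dist j k * (Nat.dist j k + c)) :=
    fun j k => calc
      |∑ i ∈ I, P i j * P i k| ≤ ∑ i ∈ I, |P i j| * |P i k| := by
        simpa only [abs_mul] using abs_sum_le_sum_abs (fun i => P i j * P i k) I
      _ ≤ ∑ i ∈ I, C ^ 2 * (r ^ Nat.dist i j * r ^ Nat.dist i k) := by
        refine sum_le_sum fun i _ => (mul_le_mul (hP i j) (hP i k) (abs_nonneg _)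
          ((abs_nonneg _).trans (hP i j))).trans (le_of_eq (by ring))
      _ ≤ C ^ 2 * (r ^ Nat.dist j k * (Nat.dist j k + 1 + 2 / (1 - r ^ 2))) := by
        rw [← mul_sum]
        gcongr
        exact sum_pow_dist_mul_pow_dist_le hr0 hr1 I j k
      _ = C ^ 2 * (r ^ Nat.dist j k * (Nat.dist j k + c)) := by ring
  have hrow : ∀ j, ∑ k ∈ I, (∑ i ∈ I, P i j * P i k) ^ 2 ≤ C ^ 4 * (2 * geomQuadSum s c) :=
    fun j => calc
      ∑ k ∈ I, (∑ i ∈ I, P i j * P i k) ^ 2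
          ≤ ∑ k ∈ I, C ^ 4 * (s ^ Nat.dist j k * ((Nat.dist j k : ℝ) + c) ^ 2) := by
        gcongr with k
        rw [← sq_abs]
        exact (pow_le_pow_left₀ (abs_nonneg _) (hB j k) 2).trans_eq (by ring)
      _ ≤ C ^ 4 * (2 * geomQuadSum s c) := by
        rw [← mul_sum]
        gcongr
        exact sum_comp_dist_le (φ := fun t => s ^ t * ((t : ℝ) + c) ^ 2)
          (fun t => by positivity) (sum_range_pow_mul_add_sq_le hs0 hs1 hc) I j
  have hK : geomQuadSum s c = (9 + s) / (1 - s) ^ 3 := by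
    unfold geomQuadSum c
    field_simp
    ring
  calc ∑ j ∈ I, ∑ k ∈ I, (∑ i ∈ I, P i j * P i k) ^ 2
      ≤ ∑ j ∈ I, C ^ 4 * (2 * geomQuadSum s c) := sum_le_sum fun j _ => hrow j
    _ = (18 + 2 * s) * (#I * C ^ 4 / (1 - s) ^ 3) := by
      rw [sum_const, nsmul_eq_mul, hK]
      ring
    _ ≤ 20 * (#I * C ^ 4 / (1 - s) ^ 3) := by
      gcongr
      linarith
    _ = 20 * #I * C ^ 4 / (1 - r ^ 2) ^ 3 := by ring

theorem sum_four_cycle_eq_sum_sq {ι R : Type*} [CommSemiring R] (I : Finset ι)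
    {P : ι → ι → R} (hP : ∀ i j, P i j = P j i) :
    ∑ i ∈ I, ∑ j ∈ I, ∑ k ∈ I, ∑ l ∈ I, P i j * P k l * P i k * P j l =
      ∑ j ∈ I, ∑ k ∈ I, (∑ i ∈ I, P i j * P i k) ^ 2 := by
  simp_rw [sq, sum_mul_sum]
  rw [sum_comm]
  refine sum_congr rfl fun j _ => ?_
  rw [sum_comm]
  refine sum_congr rfl fun k _ => sum_congr rfl fun i _ => sum_congr rfl fun l _ => ?_
  rw [hP k l, hP j l]
  ring

section Orthogonal

variable {H ι : Type*} [NormedAddCommGroup H] [InnerProductSpace ℝ H]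

theorem inner_tsum_smul_right {v : ι → H} {c : ι → ℝ} (hs : Summable fun i => c i • v i)
    (x : H) : ⟪x, ∑' i, c i • v i⟫ = ∑' i, c i * ⟪x, v i⟫ := by
  simpa [real_inner_smul_right] using (innerSL ℝ x).map_tsum hs

theorem inner_tsum_smul_right_eq_zero {v : ι → H} (c : ι → ℝ) {x : H}
    (hx : ∀ i, ⟪x, v i⟫ = 0) : ⟪x, ∑' i, c i • v i⟫ = 0 := by
  by_cases hs : Summable fun i => c i • v i
  · simp [inner_tsum_smul_right hs, hx]
  · rw [tsum_eq_zero_of_not_summable hs, inner_zero_right]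

theorem Orthonormal.inner_tsum_smul_self_le {v : ι → H} (hv : Orthonormal ℝ v) (c : ι → ℝ) :
    ⟪∑' i, c i • v i, ∑' i, c i • v i⟫ ≤ ∑' i, c i ^ 2 := by
  classical
  by_cases hs : Summable fun i => c i • v i
  · refine (inner_tsum_smul_right hs _).trans_le (le_of_eq (tsum_congr fun j => ?_))
    rw [real_inner_comm, inner_tsum_smul_right hs]
    simp [orthonormal_iff_ite.mp hv, sq]
  · rw [tsum_eq_zero_of_not_summable hs, inner_zero_left]
    exact tsum_nonneg fun i => sq_nonneg _

theorem inner_sum_smul_sum_smul_of_pairwise_inner_eq_zero [DecidableEq ι] {w : ι → H}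
    (hw : Pairwise fun k k' => ⟪w k, w k'⟫ = 0) (S T : Finset ι) (α β : ι → ℝ) :
    ⟪∑ k ∈ S, α k • w k, ∑ k ∈ T, β k • w k⟫ = ∑ k ∈ S ∩ T, α k * β k * ⟪w k, w k⟫ := by
  have hterm : ∀ k k',
      ⟪α k • w k, β k' • w k'⟫ = if k = k' then α k * β k * ⟪w k, w k⟫ else 0 := by
    intro k k'
    rw [real_inner_smul_left, real_inner_smul_right]
    split_ifs with h
    · subst h; ring
    · rw [hw h, mul_zero, mul_zero]
  rw [← sum_ite_mem, sum_inner]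
  refine sum_congr rfl fun k _ => ?_
  simp only [inner_sum, hterm]
  exact sum_ite_eq T k _

theorem Orthonormal.pairwise_inner_tsum_smul_eq_zero {e : ℕ → ℕ → H}
    (he : Orthonormal ℝ fun q : ℕ × ℕ => e q.1 q.2) (σ : ℕ → ℝ) :
    Pairwise fun k k' => ⟪∑' δ, σ δ • e k δ, ∑' δ, σ δ • e k' δ⟫ = 0 := by
  intro k k' hkk'
  refine inner_tsum_smul_right_eq_zero σ fun δ' => ?_
  rw [real_inner_comm]
  exact inner_tsum_smul_right_eq_zero σ fun δ =>
    he.2 (show ((k', δ') : ℕ × ℕ) ≠ (k, δ) from fun h => hkk' (congrArg Prod.fst h).symm)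

theorem abs_inner_le_of_eq_sum_pow_smul {w : ℕ → H}
    (hw : Pairwise fun k k' => ⟪w k, w k'⟫ = 0) {S : ℝ} (hS : ∀ k, ⟪w k, w k⟫ ≤ S) {a : ℝ}
    (ha : |a| < 1) {f : ℕ → H}
    (hf : ∀ i, f i = ∑ k ∈ Icc 1 i, a ^ (i - k) • w k) (i j : ℕ) :
    |⟪f i, f j⟫| ≤ S / (1 - a ^ 2) * |a| ^ Nat.dist i j := by
  have hS0 : 0 ≤ S := real_inner_self_nonneg.trans (hS 0)
  have hs1 : a ^ 2 < 1 := sq_abs a ▸ pow_lt_one₀ (abs_nonneg a) ha two_ne_zero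
  set m := min i j
  have hIcc : Icc 1 i ∩ Icc 1 j = Icc 1 m := by
    ext
    simp only [mem_inter, mem_Icc, m]
    omega
  rw [hf, hf, inner_sum_smul_sum_smul_of_pairwise_inner_eq_zero hw, hIcc]
  calc |∑ k ∈ Icc 1 m, a ^ (i - k) * a ^ (j - k) * ⟪w k, w k⟫|
      ≤ ∑ k ∈ Icc 1 m, |a ^ (i - k) * a ^ (j - k) * ⟪w k, w k⟫| := abs_sum_le_sum_abs _ _
    _ ≤ ∑ k ∈ Icc 1 m, |a| ^ Nat.dist i j * (a ^ 2) ^ (m - k) * S := by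
      refine sum_le_sum fun k hk => ?_
      have hexp : (i - k) + (j - k) = Nat.dist i j + 2 * (m - k) := by
        rw [mem_Icc] at hk
        unfold Nat.dist
        omega
      rw [abs_mul, abs_mul, abs_pow, abs_pow, abs_of_nonneg real_inner_self_nonneg, ← pow_add,
        hexp, pow_add, pow_mul, sq_abs]
      exact mul_le_mul_of_nonneg_left (hS k) (by positivity)
    _ = |a| ^ Nat.dist i j * (∑ k ∈ Icc 1 m, (a ^ 2) ^ (m - k)) * S := by
      rw [mul_sum, sum_mul]
    _ ≤ |a| ^ Nat.dist i j * (1 / (1 - a ^ 2)) * S := by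
      gcongr
      refine sum_pow_comp_le_of_injOn (sq_nonneg a) hs1 fun x hx y hy hxy => ?_
      simp only [coe_Icc, Set.mem_Icc] at hx hy hxy
      omega
    _ = S / (1 - a ^ 2) * |a| ^ Nat.dist i j := by ring

end Orthogonal

theorem stmt_13_general
    {H : Type*} [NormedAddCommGroup H] [InnerProductSpace ℝ H]
    (e : ℕ → ℕ → H) (he : Orthonormal ℝ (fun q : ℕ × ℕ => e q.1 q.2))
    (a : ℝ) (ha : |a| < 1)
    (σ : ℕ → ℝ)
    (S₂ : ℝ) (hS₂ : S₂ = ∑' δ, (σ δ) ^ 2)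
    (f : ℕ → H)
    (hf : ∀ i, f i = ∑ k ∈ Finset.Icc 1 i, a ^ (i - k) • ∑' δ, σ δ • e k δ) :
    ∀ n : ℕ, 1 ≤ n →
      (1 / (n : ℝ) ^ 2) *
          ∑ i ∈ Finset.Icc 1 n, ∑ j ∈ Finset.Icc 1 n, ∑ k ∈ Finset.Icc 1 n,
            ∑ l ∈ Finset.Icc 1 n, ⟪f i, f j⟫ * ⟪f k, f l⟫ * ⟪f i, f k⟫ * ⟪f j, f l⟫ ≤
        24 * S₂ ^ 4 / (n * (1 - a ^ 2) ^ 7) := by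
  intro n hn
  have hS : ∀ k, ⟪∑' δ, σ δ • e k δ, ∑' δ, σ δ • e k δ⟫ ≤ S₂ := fun k =>
    hS₂ ▸ (he.comp (fun δ => (k, δ)) fun _ _ h => (Prod.mk.inj h).2).inner_tsum_smul_self_le σ
  have hP := abs_inner_le_of_eq_sum_pow_smul (he.pairwise_inner_tsum_smul_eq_zero σ) hS ha hf
  have hsum := sum_sq_sum_mul_le_of_abs_le (abs_nonneg a) ha hP (Icc 1 n)
  rw [Nat.card_Icc, Nat.add_sub_cancel, sq_abs] at hsum
  have h1a : 0 < 1 - a ^ 2 := sub_pos.2 (sq_abs a ▸ pow_lt_one₀ (abs_nonneg a) ha two_ne_zero)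
  have hn0 : (0 : ℝ) < n := by exact_mod_cast hn
  rw [sum_four_cycle_eq_sum_sq _ fun i j => real_inner_comm (f j) (f i)]
  calc _ ≤ 1 / (n : ℝ) ^ 2 * (20 * n * (S₂ / (1 - a ^ 2)) ^ 4 / (1 - a ^ 2) ^ 3) := by gcongr
    _ = 20 * S₂ ^ 4 / (n * (1 - a ^ 2) ^ 7) := by field_simp
    _ ≤ 24 * S₂ ^ 4 / (n * (1 - a ^ 2) ^ 7) := by gcongr; norm_num

/-- Bound for the quantity dominating `‖g_{4,n} ⊗₂ g_{4,n}‖²`: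
`(1/n²) Σ_{i,j,k,l=1}^n ⟨f_i,f_j⟩⟨f_k,f_l⟩⟨f_i,f_k⟩⟨f_j,f_l⟩ ≤ 24 S₂⁴/(n (1−a²)⁷)`. -/
theorem stmt_13
    {H : Type*} [NormedAddCommGroup H] [InnerProductSpace ℝ H]
    (e : ℕ → ℕ → H) (he : Orthonormal ℝ (fun q : ℕ × ℕ => e q.1 q.2))
    (a : ℝ) (ha : |a| < 1)
    (σ : ℕ → ℝ) (hσ : Summable fun δ => (σ δ) ^ 2)
    (S₂ : ℝ) (hS₂ : S₂ = ∑' δ, (σ δ) ^ 2)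
    (f : ℕ → H)
    (hf : ∀ i, f i = ∑ k ∈ Finset.Icc 1 i, a ^ (i - k) • ∑' δ, σ δ • e k δ) :
    ∀ n : ℕ, 1 ≤ n →
      (1 / (n : ℝ) ^ 2) *
          ∑ i ∈ Finset.Icc 1 n, ∑ j ∈ Finset.Icc 1 n, ∑ k ∈ Finset.Icc 1 n,
            ∑ l ∈ Finset.Icc 1 n, ⟪f i, f j⟫ * ⟪f k, f l⟫ * ⟪f i, f k⟫ * ⟪f j, f l⟫ ≤
        24 * S₂ ^ 4 / (n * (1 - a ^ 2) ^ 7) :=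
  stmt_13_general e he a ha σ S₂ hS₂ f hf
end

section
/- For every n ≥ 1, (1/n²) · Σ_{i,j,k,l=1}^{n} ⟨f_i, f_j⟩_H · ⟨f_k, f_l⟩_H · ⟨p_{i,j}, p_{k,l}⟩_H ≤ 24 S₂² S₄ / (n (1 − a⁴)² (1 − a²)⁴). (This quantity dominates the squared contraction norm ‖g_{4,n} ⊗₃ g_{4,n}‖²_{L²}, yielding the bound C_{4,3}/√n of the paper.) -/
open scoped RealInnerProductSpace

section AuxCombinatorics

private lemma sum_pow_le {x : ℝ} (h0 : 0 ≤ x) (h1 : x < 1) (F : Finset ℕ) (g : ℕ → ℕ)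
    (hg : ∀ m ∈ F, ∀ m' ∈ F, g m = g m' → m = m') : ∑ j ∈ F, x ^ (g j) ≤ 1 / (1 - x) := by
  rw [← Finset.sum_image (f := fun s => x ^ s) hg]
  calc ∑ s ∈ F.image g, x ^ s ≤ ∑' s : ℕ, x ^ s :=
        Summable.sum_le_tsum _ (fun s _ => pow_nonneg h0 s) (summable_geometric_of_lt_one h0 h1)
    _ = (1 - x)⁻¹ := tsum_geometric_of_lt_one h0 h1
    _ = 1 / (1 - x) := (one_div _).symm

private lemma geo_tail {x : ℝ} (h0 : 0 ≤ x) (h1 : x < 1) (μ : ℕ) :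
    ∑ m ∈ Finset.Icc 1 μ, x ^ (μ - m) ≤ 1 / (1 - x) :=
  sum_pow_le h0 h1 _ _ (by
    intro m hm m' hm' h
    simp only [Finset.mem_Icc] at hm hm'
    omega)

private lemma geo_if {x : ℝ} (h0 : 0 ≤ x) (h1 : x < 1) (n i : ℕ) :
    ∑ j ∈ Finset.Icc 1 n, (if i ≤ j then x ^ (j - i) else 0) ≤ 1 / (1 - x) := by
  rw [Finset.sum_ite, Finset.sum_const_zero, add_zero]
  exact sum_pow_le h0 h1 _ _ (by
    intro m hm m' hm' h
    simp only [Finset.mem_filter, Finset.mem_Icc] at hm hm'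
    omega)

private lemma geoA {r : ℝ} (h0 : 0 ≤ r) (h1 : r < 1) (i j : ℕ) :
    ∑ m ∈ Finset.Icc 1 (min i j), r ^ ((i - m) + (j - m)) ≤
      r ^ ((i - j) + (j - i)) * (1 / (1 - r ^ 2)) := by
  have hx0 : (0:ℝ) ≤ r ^ 2 := by positivity
  have hx1 : r ^ 2 < 1 := by nlinarith
  calc ∑ m ∈ Finset.Icc 1 (min i j), r ^ ((i - m) + (j - m))
      = ∑ m ∈ Finset.Icc 1 (min i j), r ^ ((i - j) + (j - i)) * (r ^ 2) ^ (min i j - m) := by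
        refine Finset.sum_congr rfl fun m hm => ?_
        simp only [Finset.mem_Icc] at hm
        rw [← pow_mul, ← pow_add]
        congr 1
        omega
    _ = r ^ ((i - j) + (j - i)) * ∑ m ∈ Finset.Icc 1 (min i j), (r ^ 2) ^ (min i j - m) := by
        rw [Finset.mul_sum]
    _ ≤ r ^ ((i - j) + (j - i)) * (1 / (1 - r ^ 2)) :=
        mul_le_mul_of_nonneg_left (geo_tail hx0 hx1 _) (pow_nonneg h0 _)

private lemma geoB {r : ℝ} (h0 : 0 ≤ r) (h1 : r < 1) (i j k l : ℕ) :
    ∑ m ∈ Finset.Icc 1 (min (min i j) (min k l)), r ^ ((i + j - 2*m) + (k + l - 2*m)) ≤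
      r ^ ((i + j - 2*min (min i j) (min k l)) + (k + l - 2*min (min i j) (min k l))) *
        (1 / (1 - r ^ 4)) := by
  have hx0 : (0:ℝ) ≤ r ^ 4 := by positivity
  have hx1 : r ^ 4 < 1 := by nlinarith [pow_lt_one₀ h0 h1 (n := 4) (by norm_num), pow_nonneg h0 4]
  set M := min (min i j) (min k l) with hM
  calc ∑ m ∈ Finset.Icc 1 M, r ^ ((i + j - 2*m) + (k + l - 2*m))
      = ∑ m ∈ Finset.Icc 1 M, r ^ ((i + j - 2*M) + (k + l - 2*M)) * (r ^ 4) ^ (M - m) := by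
        refine Finset.sum_congr rfl fun m hm => ?_
        simp only [Finset.mem_Icc] at hm
        rw [← pow_mul, ← pow_add]
        congr 1
        omega
    _ = r ^ ((i + j - 2*M) + (k + l - 2*M)) * ∑ m ∈ Finset.Icc 1 M, (r ^ 4) ^ (M - m) := by
        rw [Finset.mul_sum]
    _ ≤ r ^ ((i + j - 2*M) + (k + l - 2*M)) * (1 / (1 - r ^ 4)) :=
        mul_le_mul_of_nonneg_left (geo_tail hx0 hx1 _) (pow_nonneg h0 _)

private lemma ite_pow_nonneg {x : ℝ} (h0 : 0 ≤ x) (P : Prop) [Decidable P] (c : ℕ) :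
    0 ≤ (if P then x ^ c else 0) := by
  split_ifs
  · exact pow_nonneg h0 c
  · exact le_refl 0

private lemma quad_bound {x : ℝ} (h0 : 0 ≤ x) (h1 : x < 1) (n i : ℕ) :
    ∑ j ∈ Finset.Icc 1 n, ∑ k ∈ Finset.Icc 1 n, ∑ l ∈ Finset.Icc 1 n,
      (if i ≤ j ∧ i ≤ k ∧ i ≤ l then x ^ (j - i) * x ^ (max k l - i) else 0) ≤
      2 / (1 - x) ^ 3 := by
  have hx : (0:ℝ) < 1 - x := by linarith
  have hinv : (0:ℝ) ≤ 1 / (1 - x) := by positivity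
  have hite : ∀ (P : Prop) [Decidable P] (c : ℕ), 0 ≤ (if P then x ^ c else 0) :=
    fun P _ c => ite_pow_nonneg h0 P c
  have key : ∀ k l : ℕ, (if i ≤ k ∧ i ≤ l then x ^ (max k l - i) else 0) ≤
      (if i ≤ l then x ^ (l - i) else 0) * (if l ≤ k then x ^ (k - l) else 0)
      + (if i ≤ k then x ^ (k - i) else 0) * (if k ≤ l then x ^ (l - k) else 0) := by
    intro k l
    have hn1 := mul_nonneg (hite (i ≤ l) (l - i)) (hite (l ≤ k) (k - l))
    have hn2 := mul_nonneg (hite (i ≤ k) (k - i)) (hite (k ≤ l) (l - k))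
    rcases le_total l k with h | h
    · rw [max_eq_left h]
      by_cases hil : i ≤ l
      · have hik : i ≤ k := hil.trans h
        rw [if_pos ⟨hik, hil⟩, if_pos hil, if_pos h]
        have : x ^ (l - i) * x ^ (k - l) = x ^ (k - i) := by
          rw [← pow_add]; congr 1; omega
        rw [this]
        linarith
      · rw [if_neg (by tauto)]
        linarith
    · rw [max_eq_right h]
      by_cases hik : i ≤ k
      · have hil : i ≤ l := hik.trans h
        rw [if_pos ⟨hik, hil⟩, if_pos hik, if_pos h]
        have : x ^ (k - i) * x ^ (l - k) = x ^ (l - i) := by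
          rw [← pow_add]; congr 1; omega
        rw [this]
        linarith
      · rw [if_neg (by tauto)]
        linarith
  have hkl : ∑ k ∈ Finset.Icc 1 n, ∑ l ∈ Finset.Icc 1 n,
      (if i ≤ k ∧ i ≤ l then x ^ (max k l - i) else 0) ≤ 2 / (1 - x) ^ 2 := by
    have hsplit : ∑ k ∈ Finset.Icc 1 n, ∑ l ∈ Finset.Icc 1 n,
        (if i ≤ k ∧ i ≤ l then x ^ (max k l - i) else 0) ≤
        (∑ k ∈ Finset.Icc 1 n, ∑ l ∈ Finset.Icc 1 n,
          (if i ≤ l then x ^ (l - i) else 0) * (if l ≤ k then x ^ (k - l) else 0))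
        + (∑ k ∈ Finset.Icc 1 n, ∑ l ∈ Finset.Icc 1 n,
          (if i ≤ k then x ^ (k - i) else 0) * (if k ≤ l then x ^ (l - k) else 0)) := by
      rw [← Finset.sum_add_distrib]
      refine Finset.sum_le_sum fun k _ => ?_
      rw [← Finset.sum_add_distrib]
      exact Finset.sum_le_sum fun l _ => key k l
    have hd1 : ∑ k ∈ Finset.Icc 1 n, ∑ l ∈ Finset.Icc 1 n,
        (if i ≤ l then x ^ (l - i) else 0) * (if l ≤ k then x ^ (k - l) else 0) ≤
        (1 / (1 - x)) * (1 / (1 - x)) := by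
      rw [Finset.sum_comm]
      calc ∑ l ∈ Finset.Icc 1 n, ∑ k ∈ Finset.Icc 1 n,
            (if i ≤ l then x ^ (l - i) else 0) * (if l ≤ k then x ^ (k - l) else 0)
          = ∑ l ∈ Finset.Icc 1 n, (if i ≤ l then x ^ (l - i) else 0) *
            ∑ k ∈ Finset.Icc 1 n, (if l ≤ k then x ^ (k - l) else 0) := by
            simp only [Finset.mul_sum]
        _ ≤ ∑ l ∈ Finset.Icc 1 n, (if i ≤ l then x ^ (l - i) else 0) * (1 / (1 - x)) := by
            refine Finset.sum_le_sum fun l _ => ?_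
            exact mul_le_mul_of_nonneg_left (geo_if h0 h1 n l) (hite _ _)
        _ = (∑ l ∈ Finset.Icc 1 n, (if i ≤ l then x ^ (l - i) else 0)) * (1 / (1 - x)) := by
            rw [Finset.sum_mul]
        _ ≤ (1 / (1 - x)) * (1 / (1 - x)) :=
            mul_le_mul_of_nonneg_right (geo_if h0 h1 n i) hinv
    have hd2 : ∑ k ∈ Finset.Icc 1 n, ∑ l ∈ Finset.Icc 1 n,
        (if i ≤ k then x ^ (k - i) else 0) * (if k ≤ l then x ^ (l - k) else 0) ≤
        (1 / (1 - x)) * (1 / (1 - x)) := by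
      calc ∑ k ∈ Finset.Icc 1 n, ∑ l ∈ Finset.Icc 1 n,
            (if i ≤ k then x ^ (k - i) else 0) * (if k ≤ l then x ^ (l - k) else 0)
          = ∑ k ∈ Finset.Icc 1 n, (if i ≤ k then x ^ (k - i) else 0) *
            ∑ l ∈ Finset.Icc 1 n, (if k ≤ l then x ^ (l - k) else 0) := by
            simp only [Finset.mul_sum]
        _ ≤ ∑ k ∈ Finset.Icc 1 n, (if i ≤ k then x ^ (k - i) else 0) * (1 / (1 - x)) := by
            refine Finset.sum_le_sum fun k _ => ?_
            exact mul_le_mul_of_nonneg_left (geo_if h0 h1 n k) (hite _ _)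
        _ = (∑ k ∈ Finset.Icc 1 n, (if i ≤ k then x ^ (k - i) else 0)) * (1 / (1 - x)) := by
            rw [Finset.sum_mul]
        _ ≤ (1 / (1 - x)) * (1 / (1 - x)) :=
            mul_le_mul_of_nonneg_right (geo_if h0 h1 n i) hinv
    calc _ ≤ _ := hsplit
      _ ≤ (1 / (1 - x)) * (1 / (1 - x)) + (1 / (1 - x)) * (1 / (1 - x)) := add_le_add hd1 hd2
      _ = 2 / (1 - x) ^ 2 := by field_simp; ring
  have hfac : ∀ j k l : ℕ,
      (if i ≤ j ∧ i ≤ k ∧ i ≤ l then x ^ (j - i) * x ^ (max k l - i) else 0) =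
      (if i ≤ j then x ^ (j - i) else 0) * (if i ≤ k ∧ i ≤ l then x ^ (max k l - i) else 0) := by
    intro j k l
    by_cases hj : i ≤ j <;> by_cases hkl' : i ≤ k ∧ i ≤ l <;> simp [hj, hkl']
  calc ∑ j ∈ Finset.Icc 1 n, ∑ k ∈ Finset.Icc 1 n, ∑ l ∈ Finset.Icc 1 n,
        (if i ≤ j ∧ i ≤ k ∧ i ≤ l then x ^ (j - i) * x ^ (max k l - i) else 0)
      = ∑ j ∈ Finset.Icc 1 n, (if i ≤ j then x ^ (j - i) else 0) *
          (∑ k ∈ Finset.Icc 1 n, ∑ l ∈ Finset.Icc 1 n,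
            (if i ≤ k ∧ i ≤ l then x ^ (max k l - i) else 0)) := by
        refine Finset.sum_congr rfl fun j _ => ?_
        simp only [Finset.mul_sum]
        exact Finset.sum_congr rfl fun k _ => Finset.sum_congr rfl fun l _ => hfac j k l
    _ ≤ ∑ j ∈ Finset.Icc 1 n, (if i ≤ j then x ^ (j - i) else 0) * (2 / (1 - x) ^ 2) := by
        refine Finset.sum_le_sum fun j _ => ?_
        exact mul_le_mul_of_nonneg_left hkl (hite _ _)
    _ = (∑ j ∈ Finset.Icc 1 n, (if i ≤ j then x ^ (j - i) else 0)) * (2 / (1 - x) ^ 2) := by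
        rw [Finset.sum_mul]
    _ ≤ (1 / (1 - x)) * (2 / (1 - x) ^ 2) :=
        mul_le_mul_of_nonneg_right (geo_if h0 h1 n i) (by positivity)
    _ = 2 / (1 - x) ^ 3 := by field_simp

private def Eexp (i j k l : ℕ) : ℕ :=
  (i - j) + (j - i) + ((k - l) + (l - k)) +
    ((i + j - 2 * min (min i j) (min k l)) + (k + l - 2 * min (min i j) (min k l)))

private lemma point_bound {r : ℝ} (h0 : 0 ≤ r) (i j k l : ℕ) :
    r ^ (Eexp i j k l) ≤
      (if i ≤ j ∧ i ≤ k ∧ i ≤ l then (r^2) ^ (j - i) * (r^2) ^ (max k l - i) else 0) +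
      (if j ≤ i ∧ j ≤ k ∧ j ≤ l then (r^2) ^ (i - j) * (r^2) ^ (max k l - j) else 0) +
      (if k ≤ l ∧ k ≤ i ∧ k ≤ j then (r^2) ^ (l - k) * (r^2) ^ (max i j - k) else 0) +
      (if l ≤ k ∧ l ≤ i ∧ l ≤ j then (r^2) ^ (k - l) * (r^2) ^ (max i j - l) else 0) := by
  have hn : ∀ (P : Prop) [Decidable P] (c d : ℕ),
      0 ≤ (if P then (r^2) ^ c * (r^2) ^ d else 0) := by
    intro P _ c d
    split_ifs
    · positivity
    · exact le_refl 0
  have hcases : (i ≤ j ∧ i ≤ k ∧ i ≤ l) ∨ (j ≤ i ∧ j ≤ k ∧ j ≤ l) ∨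
      (k ≤ l ∧ k ≤ i ∧ k ≤ j) ∨ (l ≤ k ∧ l ≤ i ∧ l ≤ j) := by omega
  rcases hcases with hc | hc | hc | hc
  · rw [if_pos hc]
    have he : Eexp i j k l = 2 * (j - i) + 2 * (max k l - i) := by
      simp only [Eexp]; omega
    rw [he, pow_add, pow_mul, pow_mul]
    have := hn (j ≤ i ∧ j ≤ k ∧ j ≤ l) (i - j) (max k l - j)
    have := hn (k ≤ l ∧ k ≤ i ∧ k ≤ j) (l - k) (max i j - k)
    have := hn (l ≤ k ∧ l ≤ i ∧ l ≤ j) (k - l) (max i j - l)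
    linarith
  · rw [if_pos hc]
    have he : Eexp i j k l = 2 * (i - j) + 2 * (max k l - j) := by
      simp only [Eexp]; omega
    rw [he, pow_add, pow_mul, pow_mul]
    have := hn (i ≤ j ∧ i ≤ k ∧ i ≤ l) (j - i) (max k l - i)
    have := hn (k ≤ l ∧ k ≤ i ∧ k ≤ j) (l - k) (max i j - k)
    have := hn (l ≤ k ∧ l ≤ i ∧ l ≤ j) (k - l) (max i j - l)
    linarith
  · rw [if_pos hc]
    have he : Eexp i j k l = 2 * (l - k) + 2 * (max i j - k) := by
      simp only [Eexp]; omega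
    rw [he, pow_add, pow_mul, pow_mul]
    have := hn (i ≤ j ∧ i ≤ k ∧ i ≤ l) (j - i) (max k l - i)
    have := hn (j ≤ i ∧ j ≤ k ∧ j ≤ l) (i - j) (max k l - j)
    have := hn (l ≤ k ∧ l ≤ i ∧ l ≤ j) (k - l) (max i j - l)
    linarith
  · rw [if_pos hc]
    have he : Eexp i j k l = 2 * (k - l) + 2 * (max i j - l) := by
      simp only [Eexp]; omega
    rw [he, pow_add, pow_mul, pow_mul]
    have := hn (i ≤ j ∧ i ≤ k ∧ i ≤ l) (j - i) (max k l - i)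
    have := hn (j ≤ i ∧ j ≤ k ∧ j ≤ l) (i - j) (max k l - j)
    have := hn (k ≤ l ∧ k ≤ i ∧ k ≤ j) (l - k) (max i j - k)
    linarith

private lemma sum4_swap (s : Finset ℕ) (F : ℕ → ℕ → ℕ → ℕ → ℝ) :
    ∑ i ∈ s, ∑ j ∈ s, ∑ k ∈ s, ∑ l ∈ s, F i j k l
      = ∑ k ∈ s, ∑ l ∈ s, ∑ i ∈ s, ∑ j ∈ s, F i j k l := by
  calc ∑ i ∈ s, ∑ j ∈ s, ∑ k ∈ s, ∑ l ∈ s, F i j k l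
      = ∑ i ∈ s, ∑ k ∈ s, ∑ j ∈ s, ∑ l ∈ s, F i j k l :=
        Finset.sum_congr rfl fun i _ => Finset.sum_comm
    _ = ∑ k ∈ s, ∑ i ∈ s, ∑ j ∈ s, ∑ l ∈ s, F i j k l := Finset.sum_comm
    _ = ∑ k ∈ s, ∑ i ∈ s, ∑ l ∈ s, ∑ j ∈ s, F i j k l :=
        Finset.sum_congr rfl fun k _ => Finset.sum_congr rfl fun i _ => Finset.sum_comm
    _ = ∑ k ∈ s, ∑ l ∈ s, ∑ i ∈ s, ∑ j ∈ s, F i j k l :=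
        Finset.sum_congr rfl fun k _ => Finset.sum_comm

private lemma main_comb {r : ℝ} (h0 : 0 ≤ r) (h1 : r < 1) (n : ℕ) :
    ∑ i ∈ Finset.Icc 1 n, ∑ j ∈ Finset.Icc 1 n, ∑ k ∈ Finset.Icc 1 n, ∑ l ∈ Finset.Icc 1 n,
      r ^ (Eexp i j k l) ≤ (n : ℝ) * (8 / (1 - r ^ 2) ^ 3) := by
  have hx0 : (0:ℝ) ≤ r ^ 2 := by positivity
  have hx1 : r ^ 2 < 1 := by nlinarith
  set s := Finset.Icc 1 n with hs
  set T1 : ℕ → ℕ → ℕ → ℕ → ℝ := fun i j k l =>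
    (if i ≤ j ∧ i ≤ k ∧ i ≤ l then (r^2) ^ (j - i) * (r^2) ^ (max k l - i) else 0) with hT1
  set T2 : ℕ → ℕ → ℕ → ℕ → ℝ := fun i j k l =>
    (if j ≤ i ∧ j ≤ k ∧ j ≤ l then (r^2) ^ (i - j) * (r^2) ^ (max k l - j) else 0) with hT2
  set T3 : ℕ → ℕ → ℕ → ℕ → ℝ := fun i j k l =>
    (if k ≤ l ∧ k ≤ i ∧ k ≤ j then (r^2) ^ (l - k) * (r^2) ^ (max i j - k) else 0) with hT3
  set T4 : ℕ → ℕ → ℕ → ℕ → ℝ := fun i j k l =>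
    (if l ≤ k ∧ l ≤ i ∧ l ≤ j then (r^2) ^ (k - l) * (r^2) ^ (max i j - l) else 0) with hT4
  have hcard : (s.card : ℝ) ≤ (n : ℝ) := by
    simp [hs, Nat.card_Icc]
  have hQ : (0:ℝ) ≤ 2 / (1 - r ^ 2) ^ 3 := by
    have : (0:ℝ) < 1 - r ^ 2 := by linarith
    positivity
  have hB1 : ∑ i ∈ s, ∑ j ∈ s, ∑ k ∈ s, ∑ l ∈ s, T1 i j k l ≤ (n:ℝ) * (2 / (1 - r^2)^3) := by
    calc ∑ i ∈ s, ∑ j ∈ s, ∑ k ∈ s, ∑ l ∈ s, T1 i j k l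
        ≤ ∑ i ∈ s, (2 / (1 - r^2)^3) := Finset.sum_le_sum fun i _ => quad_bound hx0 hx1 n i
      _ = (s.card : ℝ) * (2 / (1 - r^2)^3) := by rw [Finset.sum_const, nsmul_eq_mul]
      _ ≤ (n:ℝ) * (2 / (1 - r^2)^3) := mul_le_mul_of_nonneg_right hcard hQ
  have hB2 : ∑ i ∈ s, ∑ j ∈ s, ∑ k ∈ s, ∑ l ∈ s, T2 i j k l ≤ (n:ℝ) * (2 / (1 - r^2)^3) := by
    rw [Finset.sum_comm]
    calc ∑ j ∈ s, ∑ i ∈ s, ∑ k ∈ s, ∑ l ∈ s, T2 i j k l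
        ≤ ∑ j ∈ s, (2 / (1 - r^2)^3) := Finset.sum_le_sum fun j _ => quad_bound hx0 hx1 n j
      _ = (s.card : ℝ) * (2 / (1 - r^2)^3) := by rw [Finset.sum_const, nsmul_eq_mul]
      _ ≤ (n:ℝ) * (2 / (1 - r^2)^3) := mul_le_mul_of_nonneg_right hcard hQ
  have hB3 : ∑ i ∈ s, ∑ j ∈ s, ∑ k ∈ s, ∑ l ∈ s, T3 i j k l ≤ (n:ℝ) * (2 / (1 - r^2)^3) := by
    rw [sum4_swap]
    calc ∑ k ∈ s, ∑ l ∈ s, ∑ i ∈ s, ∑ j ∈ s, T3 i j k l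
        ≤ ∑ k ∈ s, (2 / (1 - r^2)^3) := Finset.sum_le_sum fun k _ => quad_bound hx0 hx1 n k
      _ = (s.card : ℝ) * (2 / (1 - r^2)^3) := by rw [Finset.sum_const, nsmul_eq_mul]
      _ ≤ (n:ℝ) * (2 / (1 - r^2)^3) := mul_le_mul_of_nonneg_right hcard hQ
  have hB4 : ∑ i ∈ s, ∑ j ∈ s, ∑ k ∈ s, ∑ l ∈ s, T4 i j k l ≤ (n:ℝ) * (2 / (1 - r^2)^3) := by
    rw [sum4_swap, Finset.sum_comm]
    calc ∑ l ∈ s, ∑ k ∈ s, ∑ i ∈ s, ∑ j ∈ s, T4 i j k l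
        ≤ ∑ l ∈ s, (2 / (1 - r^2)^3) := Finset.sum_le_sum fun l _ => quad_bound hx0 hx1 n l
      _ = (s.card : ℝ) * (2 / (1 - r^2)^3) := by rw [Finset.sum_const, nsmul_eq_mul]
      _ ≤ (n:ℝ) * (2 / (1 - r^2)^3) := mul_le_mul_of_nonneg_right hcard hQ
  calc ∑ i ∈ s, ∑ j ∈ s, ∑ k ∈ s, ∑ l ∈ s, r ^ (Eexp i j k l)
      ≤ ∑ i ∈ s, ∑ j ∈ s, ∑ k ∈ s, ∑ l ∈ s,
          (T1 i j k l + T2 i j k l + T3 i j k l + T4 i j k l) := by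
        refine Finset.sum_le_sum fun i _ => Finset.sum_le_sum fun j _ =>
          Finset.sum_le_sum fun k _ => Finset.sum_le_sum fun l _ => ?_
        exact point_bound h0 i j k l
    _ = (∑ i ∈ s, ∑ j ∈ s, ∑ k ∈ s, ∑ l ∈ s, T1 i j k l)
        + (∑ i ∈ s, ∑ j ∈ s, ∑ k ∈ s, ∑ l ∈ s, T2 i j k l)
        + (∑ i ∈ s, ∑ j ∈ s, ∑ k ∈ s, ∑ l ∈ s, T3 i j k l)
        + (∑ i ∈ s, ∑ j ∈ s, ∑ k ∈ s, ∑ l ∈ s, T4 i j k l) := by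
        simp only [Finset.sum_add_distrib]
    _ ≤ (n:ℝ) * (2 / (1 - r^2)^3) + (n:ℝ) * (2 / (1 - r^2)^3)
        + (n:ℝ) * (2 / (1 - r^2)^3) + (n:ℝ) * (2 / (1 - r^2)^3) :=
        add_le_add (add_le_add (add_le_add hB1 hB2) hB3) hB4
    _ = (n : ℝ) * (8 / (1 - r ^ 2) ^ 3) := by ring

end AuxCombinatorics

section AuxHilbert

variable {H : Type*} [NormedAddCommGroup H] [InnerProductSpace ℝ H]

private lemma inner_e_e {e : ℕ → ℕ → H} (he : Orthonormal ℝ (fun q : ℕ × ℕ => e q.1 q.2))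
    (k δ k' δ' : ℕ) : ⟪e k δ, e k' δ'⟫ = if k = k' ∧ δ = δ' then (1:ℝ) else 0 := by
  have h := orthonormal_iff_ite.mp he (k, δ) (k', δ')
  simpa [Prod.ext_iff] using h

private lemma key_single {e : ℕ → ℕ → H} (he : Orthonormal ℝ (fun q : ℕ × ℕ => e q.1 q.2))
    (c : ℕ → ℝ) (k : ℕ) (hsum : Summable (fun δ => c δ • e k δ)) (m δ0 : ℕ) :
    ⟪(∑' δ, c δ • e k δ), e m δ0⟫ = if k = m then c δ0 else 0 := by
  rw [real_inner_comm]
  have h := (innerSL ℝ (e m δ0)).hasSum hsum.hasSum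
  have heq : (fun δ => (innerSL ℝ (e m δ0)) (c δ • e k δ)) =
      fun δ => if δ = δ0 then (if k = m then c δ0 else 0) else 0 := by
    funext δ
    simp only [innerSL_apply_apply, real_inner_smul_right, inner_e_e he]
    have hcond : (m = k ∧ δ0 = δ) ↔ (k = m ∧ δ = δ0) := by
      constructor <;> rintro ⟨h1, h2⟩ <;> exact ⟨h1.symm, h2.symm⟩
    simp only [hcond]
    by_cases h2 : δ = δ0
    · subst h2
      by_cases h1 : k = m <;> simp [h1]
    · simp [h2]
  rw [heq] at h
  exact h.unique (hasSum_ite_eq δ0 _)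

open scoped Classical in
private lemma key_uu {e : ℕ → ℕ → H} (he : Orthonormal ℝ (fun q : ℕ × ℕ => e q.1 q.2))
    (c : ℕ → ℝ) (k k' : ℕ) :
    ⟪(∑' δ, c δ • e k δ), (∑' δ, c δ • e k' δ)⟫ =
      if k = k' ∧ Summable (fun δ => c δ • e k δ) then ∑' δ, (c δ)^2 else 0 := by
  by_cases hk : Summable (fun δ => c δ • e k δ)
  · by_cases hk' : Summable (fun δ => c δ • e k' δ)
    · have h := (innerSL ℝ (∑' δ, c δ • e k δ)).hasSum hk'.hasSum
      by_cases hkk : k = k'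
      · subst hkk
        have heq : (fun δ => (innerSL ℝ (∑' δ, c δ • e k δ)) (c δ • e k δ)) =
            fun δ => (c δ)^2 := by
          funext δ
          simp only [innerSL_apply_apply, real_inner_smul_right, key_single he c k hk k δ]
          simp only [if_true]
          ring
        rw [heq] at h
        rw [if_pos ⟨rfl, hk⟩]
        exact (h.tsum_eq).symm
      · have heq : (fun δ => (innerSL ℝ (∑' δ, c δ • e k δ)) (c δ • e k' δ)) =
            fun _ => (0:ℝ) := by
          funext δ
          simp [innerSL_apply_apply, real_inner_smul_right, key_single he c k hk k' δ, hkk]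
        rw [heq] at h
        rw [if_neg (by tauto)]
        exact (h.unique hasSum_zero)
    · have hkk : k ≠ k' := by rintro rfl; exact hk' hk
      rw [tsum_eq_zero_of_not_summable hk', inner_zero_right, if_neg (by tauto)]
  · rw [tsum_eq_zero_of_not_summable hk, inner_zero_left, if_neg (by tauto)]

open scoped Classical in
private lemma inner_sum_formula {e : ℕ → ℕ → H}
    (he : Orthonormal ℝ (fun q : ℕ × ℕ => e q.1 q.2))
    (c : ℕ → ℝ) (b1 b2 : ℕ → ℝ) (I J : ℕ) :
    ⟪∑ k ∈ Finset.Icc 1 I, b1 k • ∑' δ, c δ • e k δ,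
        ∑ k ∈ Finset.Icc 1 J, b2 k • ∑' δ, c δ • e k δ⟫ =
      ∑ m ∈ Finset.Icc 1 (min I J),
        (b1 m * b2 m) * (if Summable (fun δ => c δ • e m δ) then ∑' δ, (c δ)^2 else 0) := by
  rw [sum_inner]
  have step1 : ∀ k : ℕ,
      ⟪b1 k • ∑' δ, c δ • e k δ, ∑ k' ∈ Finset.Icc 1 J, b2 k' • ∑' δ, c δ • e k' δ⟫ =
      if k ∈ Finset.Icc 1 J then
        (b1 k * b2 k) * (if Summable (fun δ => c δ • e k δ) then ∑' δ, (c δ)^2 else 0)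
      else 0 := by
    intro k
    rw [inner_sum]
    rw [← Finset.sum_ite_eq (Finset.Icc 1 J) k
      (fun k' => (b1 k * b2 k') * (if Summable (fun δ => c δ • e k δ) then ∑' δ, (c δ)^2 else 0))]
    refine Finset.sum_congr rfl fun k' _ => ?_
    rw [real_inner_smul_left, real_inner_smul_right, key_uu he c k k']
    by_cases h1 : k = k'
    · subst h1
      by_cases h2 : Summable (fun δ => c δ • e k δ) <;> simp [h2] <;> ring
    · simp [h1]
  calc ∑ k ∈ Finset.Icc 1 I,
        ⟪b1 k • ∑' δ, c δ • e k δ, ∑ k' ∈ Finset.Icc 1 J, b2 k' • ∑' δ, c δ • e k' δ⟫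
      = ∑ k ∈ Finset.Icc 1 I, (if k ∈ Finset.Icc 1 J then
          (b1 k * b2 k) * (if Summable (fun δ => c δ • e k δ) then ∑' δ, (c δ)^2 else 0)
        else 0) := Finset.sum_congr rfl fun k _ => step1 k
    _ = ∑ m ∈ Finset.Icc 1 I ∩ Finset.Icc 1 J,
          (b1 m * b2 m) * (if Summable (fun δ => c δ • e m δ) then ∑' δ, (c δ)^2 else 0) :=
        Finset.sum_ite_mem _ _ _
    _ = ∑ m ∈ Finset.Icc 1 (min I J),
          (b1 m * b2 m) * (if Summable (fun δ => c δ • e m δ) then ∑' δ, (c δ)^2 else 0) := by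
        congr 1
        ext m
        simp only [Finset.mem_inter, Finset.mem_Icc]
        omega

end AuxHilbert

/-- Bound for the quantity dominating `‖g_{4,n} ⊗₃ g_{4,n}‖²`:
`(1/n²) Σ_{i,j,k,l=1}^n ⟨f_i,f_j⟩⟨f_k,f_l⟩⟨p_{i,j},p_{k,l}⟩ ≤ 24 S₂² S₄/(n (1−a⁴)² (1−a²)⁴)`. -/
theorem stmt_14
    {H : Type*} [NormedAddCommGroup H] [InnerProductSpace ℝ H]
    (e : ℕ → ℕ → H) (he : Orthonormal ℝ (fun q : ℕ × ℕ => e q.1 q.2))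
    (a : ℝ) (ha : |a| < 1)
    (σ : ℕ → ℝ) (hσ : Summable fun δ => (σ δ) ^ 2)
    (S₂ S₄ : ℝ) (hS₂ : S₂ = ∑' δ, (σ δ) ^ 2) (hS₄ : S₄ = ∑' δ, (σ δ) ^ 4)
    (f : ℕ → H)
    (hf : ∀ i, f i = ∑ k ∈ Finset.Icc 1 i, a ^ (i - k) • ∑' δ, σ δ • e k δ)
    (p : ℕ → ℕ → H)
    (hp : ∀ i j, p i j =
      ∑ m ∈ Finset.Icc 1 (min i j), a ^ (i + j - 2 * m) • ∑' δ, (σ δ) ^ 2 • e m δ) :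
    ∀ n : ℕ, 1 ≤ n →
      (1 / (n : ℝ) ^ 2) *
          ∑ i ∈ Finset.Icc 1 n, ∑ j ∈ Finset.Icc 1 n, ∑ k ∈ Finset.Icc 1 n,
            ∑ l ∈ Finset.Icc 1 n, ⟪f i, f j⟫ * ⟪f k, f l⟫ * ⟪p i j, p k l⟫ ≤
        24 * S₂ ^ 2 * S₄ / (n * (1 - a ^ 4) ^ 2 * (1 - a ^ 2) ^ 4) := by
  classical
  intro n hn
  set r := |a| with hrdef
  have hr0 : 0 ≤ r := abs_nonneg a
  have hr1 : r < 1 := ha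
  have h2pos : (0:ℝ) < 1 - r ^ 2 := by nlinarith
  have h4pos : (0:ℝ) < 1 - r ^ 4 := by
    nlinarith [pow_lt_one₀ hr0 hr1 (n := 4) (by norm_num), pow_nonneg hr0 4]
  have hS₂0 : 0 ≤ S₂ := by rw [hS₂]; exact tsum_nonneg fun δ => sq_nonneg _
  have hS₄0 : 0 ≤ S₄ := by
    rw [hS₄]; exact tsum_nonneg fun δ => by positivity
  have hS₄' : (∑' δ, ((σ δ) ^ 2) ^ 2) = S₄ := by
    rw [hS₄]; exact tsum_congr fun δ => by ring
  -- inner product formulas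
  have hff : ∀ i j : ℕ, ⟪f i, f j⟫ = ∑ m ∈ Finset.Icc 1 (min i j),
      (a ^ (i - m) * a ^ (j - m)) *
        (if Summable (fun δ => σ δ • e m δ) then ∑' δ, (σ δ) ^ 2 else 0) := by
    intro i j
    rw [hf i, hf j]
    exact inner_sum_formula he σ (fun m => a ^ (i - m)) (fun m => a ^ (j - m)) i j
  have hpp : ∀ i j k l : ℕ,
      ⟪p i j, p k l⟫ = ∑ m ∈ Finset.Icc 1 (min (min i j) (min k l)),
      (a ^ (i + j - 2 * m) * a ^ (k + l - 2 * m)) *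
        (if Summable (fun δ => (σ δ) ^ 2 • e m δ) then ∑' δ, ((σ δ) ^ 2) ^ 2 else 0) := by
    intro i j k l
    rw [hp i j, hp k l]
    exact inner_sum_formula he (fun δ => (σ δ) ^ 2) (fun m => a ^ (i + j - 2 * m))
      (fun m => a ^ (k + l - 2 * m)) (min i j) (min k l)
  -- absolute value bounds
  have hitef : ∀ (P : Prop) [Decidable P],
      |if P then ∑' δ, (σ δ) ^ 2 else 0| ≤ S₂ := by
    intro P _
    split_ifs
    · rw [hS₂, abs_of_nonneg (tsum_nonneg fun δ => sq_nonneg _)]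
    · simpa using hS₂0
  have hitep : ∀ (P : Prop) [Decidable P],
      |if P then ∑' δ, ((σ δ) ^ 2) ^ 2 else 0| ≤ S₄ := by
    intro P _
    split_ifs
    · rw [abs_of_nonneg (tsum_nonneg fun δ => sq_nonneg _), hS₄']
    · simpa using hS₄0
  have habsf : ∀ i j : ℕ,
      |⟪f i, f j⟫| ≤ S₂ * (r ^ ((i - j) + (j - i)) * (1 / (1 - r ^ 2))) := by
    intro i j
    rw [hff i j]
    calc |∑ m ∈ Finset.Icc 1 (min i j), (a ^ (i - m) * a ^ (j - m)) *
          (if Summable (fun δ => σ δ • e m δ) then ∑' δ, (σ δ) ^ 2 else 0)|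
        ≤ ∑ m ∈ Finset.Icc 1 (min i j), |(a ^ (i - m) * a ^ (j - m)) *
          (if Summable (fun δ => σ δ • e m δ) then ∑' δ, (σ δ) ^ 2 else 0)| :=
          Finset.abs_sum_le_sum_abs _ _
      _ ≤ ∑ m ∈ Finset.Icc 1 (min i j), r ^ ((i - m) + (j - m)) * S₂ := by
          refine Finset.sum_le_sum fun m _ => ?_
          rw [abs_mul]
          have h1 : |a ^ (i - m) * a ^ (j - m)| = r ^ ((i - m) + (j - m)) := by
            rw [abs_mul, abs_pow, abs_pow, pow_add]
          rw [h1]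
          exact mul_le_mul_of_nonneg_left (hitef _) (pow_nonneg hr0 _)
      _ = (∑ m ∈ Finset.Icc 1 (min i j), r ^ ((i - m) + (j - m))) * S₂ := by
          rw [Finset.sum_mul]
      _ ≤ (r ^ ((i - j) + (j - i)) * (1 / (1 - r ^ 2))) * S₂ :=
          mul_le_mul_of_nonneg_right (geoA hr0 hr1 i j) hS₂0
      _ = S₂ * (r ^ ((i - j) + (j - i)) * (1 / (1 - r ^ 2))) := mul_comm _ _
  have habsp : ∀ i j k l : ℕ,
      |⟪p i j, p k l⟫| ≤ S₄ * (r ^ ((i + j - 2 * min (min i j) (min k l)) +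
        (k + l - 2 * min (min i j) (min k l))) * (1 / (1 - r ^ 4))) := by
    intro i j k l
    rw [hpp i j k l]
    calc |∑ m ∈ Finset.Icc 1 (min (min i j) (min k l)),
          (a ^ (i + j - 2 * m) * a ^ (k + l - 2 * m)) *
          (if Summable (fun δ => (σ δ) ^ 2 • e m δ) then ∑' δ, ((σ δ) ^ 2) ^ 2 else 0)|
        ≤ ∑ m ∈ Finset.Icc 1 (min (min i j) (min k l)),
          |(a ^ (i + j - 2 * m) * a ^ (k + l - 2 * m)) *
          (if Summable (fun δ => (σ δ) ^ 2 • e m δ) then ∑' δ, ((σ δ) ^ 2) ^ 2 else 0)| :=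
          Finset.abs_sum_le_sum_abs _ _
      _ ≤ ∑ m ∈ Finset.Icc 1 (min (min i j) (min k l)),
          r ^ ((i + j - 2 * m) + (k + l - 2 * m)) * S₄ := by
          refine Finset.sum_le_sum fun m _ => ?_
          rw [abs_mul]
          have h1 : |a ^ (i + j - 2 * m) * a ^ (k + l - 2 * m)| =
              r ^ ((i + j - 2 * m) + (k + l - 2 * m)) := by
            rw [abs_mul, abs_pow, abs_pow, pow_add]
          rw [h1]
          exact mul_le_mul_of_nonneg_left (hitep _) (pow_nonneg hr0 _)
      _ = (∑ m ∈ Finset.Icc 1 (min (min i j) (min k l)),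
          r ^ ((i + j - 2 * m) + (k + l - 2 * m))) * S₄ := by
          rw [Finset.sum_mul]
      _ ≤ (r ^ ((i + j - 2 * min (min i j) (min k l)) +
          (k + l - 2 * min (min i j) (min k l))) * (1 / (1 - r ^ 4))) * S₄ :=
          mul_le_mul_of_nonneg_right (geoB hr0 hr1 i j k l) hS₄0
      _ = S₄ * _ := mul_comm _ _
  -- per-term bound
  have hi2 : (0:ℝ) ≤ 1 / (1 - r ^ 2) := (one_div_nonneg).mpr h2pos.le
  have hi4 : (0:ℝ) ≤ 1 / (1 - r ^ 4) := (one_div_nonneg).mpr h4pos.le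
  set K : ℝ := S₂ * S₂ * S₄ * ((1 / (1 - r ^ 2)) * (1 / (1 - r ^ 2)) * (1 / (1 - r ^ 4)))
    with hK
  have hK0 : 0 ≤ K := by
    rw [hK]
    exact mul_nonneg (mul_nonneg (mul_nonneg hS₂0 hS₂0) hS₄0)
      (mul_nonneg (mul_nonneg hi2 hi2) hi4)
  have hterm : ∀ i j k l : ℕ,
      ⟪f i, f j⟫ * ⟪f k, f l⟫ * ⟪p i j, p k l⟫ ≤ K * r ^ (Eexp i j k l) := by
    intro i j k l
    have h1 := habsf i j
    have h2 := habsf k l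
    have h3 := habsp i j k l
    have hb1 : (0:ℝ) ≤ S₂ * (r ^ ((i - j) + (j - i)) * (1 / (1 - r ^ 2))) :=
      le_trans (abs_nonneg _) h1
    have hb2 : (0:ℝ) ≤ S₂ * (r ^ ((k - l) + (l - k)) * (1 / (1 - r ^ 2))) :=
      le_trans (abs_nonneg _) h2
    calc ⟪f i, f j⟫ * ⟪f k, f l⟫ * ⟪p i j, p k l⟫
        ≤ |⟪f i, f j⟫ * ⟪f k, f l⟫ * ⟪p i j, p k l⟫| := le_abs_self _
      _ = |⟪f i, f j⟫| * |⟪f k, f l⟫| * |⟪p i j, p k l⟫| := by rw [abs_mul, abs_mul]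
      _ ≤ (S₂ * (r ^ ((i - j) + (j - i)) * (1 / (1 - r ^ 2)))) *
          (S₂ * (r ^ ((k - l) + (l - k)) * (1 / (1 - r ^ 2)))) *
          (S₄ * (r ^ ((i + j - 2 * min (min i j) (min k l)) +
            (k + l - 2 * min (min i j) (min k l))) * (1 / (1 - r ^ 4)))) := by
          exact mul_le_mul (mul_le_mul h1 h2 (abs_nonneg _) hb1) h3 (abs_nonneg _)
            (mul_nonneg hb1 hb2)
      _ = K * r ^ (Eexp i j k l) := by
          rw [hK]
          simp only [Eexp]
          rw [pow_add, pow_add]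
          ring
  -- summing up
  have htotal : ∑ i ∈ Finset.Icc 1 n, ∑ j ∈ Finset.Icc 1 n, ∑ k ∈ Finset.Icc 1 n,
      ∑ l ∈ Finset.Icc 1 n, ⟪f i, f j⟫ * ⟪f k, f l⟫ * ⟪p i j, p k l⟫ ≤
      K * ((n : ℝ) * (8 / (1 - r ^ 2) ^ 3)) := by
    calc ∑ i ∈ Finset.Icc 1 n, ∑ j ∈ Finset.Icc 1 n, ∑ k ∈ Finset.Icc 1 n,
          ∑ l ∈ Finset.Icc 1 n, ⟪f i, f j⟫ * ⟪f k, f l⟫ * ⟪p i j, p k l⟫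
        ≤ ∑ i ∈ Finset.Icc 1 n, ∑ j ∈ Finset.Icc 1 n, ∑ k ∈ Finset.Icc 1 n,
          ∑ l ∈ Finset.Icc 1 n, K * r ^ (Eexp i j k l) := by
          refine Finset.sum_le_sum fun i _ => Finset.sum_le_sum fun j _ =>
            Finset.sum_le_sum fun k _ => Finset.sum_le_sum fun l _ => hterm i j k l
      _ = K * (∑ i ∈ Finset.Icc 1 n, ∑ j ∈ Finset.Icc 1 n, ∑ k ∈ Finset.Icc 1 n,
          ∑ l ∈ Finset.Icc 1 n, r ^ (Eexp i j k l)) := by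
          simp only [← Finset.mul_sum]
      _ ≤ K * ((n : ℝ) * (8 / (1 - r ^ 2) ^ 3)) :=
          mul_le_mul_of_nonneg_left (main_comb hr0 hr1 n) hK0
  have hn1 : (1:ℝ) ≤ (n:ℝ) := by exact_mod_cast hn
  have hnpos : (0:ℝ) < (n:ℝ) := by linarith
  have hstep := mul_le_mul_of_nonneg_left htotal
    (by positivity : (0:ℝ) ≤ 1 / (n : ℝ) ^ 2)
  refine hstep.trans ?_
  -- pure arithmetic
  have hr2 : r ^ 2 = a ^ 2 := sq_abs a
  have hr4 : r ^ 4 = a ^ 4 := by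
    rw [show r ^ 4 = (r ^ 2) ^ 2 from by ring, hr2]; ring
  have hA2 : (0:ℝ) < 1 - a ^ 2 := by rw [← hr2]; exact h2pos
  have hA4 : (0:ℝ) < 1 - a ^ 4 := by rw [← hr4]; exact h4pos
  rw [hK, hr2, hr4]
  have hLHS : (1 / (n:ℝ) ^ 2) * (S₂ * S₂ * S₄ *
      ((1 / (1 - a ^ 2)) * (1 / (1 - a ^ 2)) * (1 / (1 - a ^ 4))) *
      ((n:ℝ) * (8 / (1 - a ^ 2) ^ 3))) =
      (8 * S₂ ^ 2 * S₄) / ((n:ℝ) * (1 - a ^ 2) ^ 5 * (1 - a ^ 4)) := by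
    field_simp
  rw [hLHS, div_le_div_iff₀ (by positivity) (by positivity)]
  have h2a : (0:ℝ) ≤ 2 - a ^ 2 := by nlinarith
  have h84 : 8 * (1 - a ^ 4) ≤ 24 * (1 - a ^ 2) := by
    nlinarith [mul_nonneg hA2.le h2a]
  have hC0 : 0 ≤ S₂ ^ 2 * S₄ * (n:ℝ) * (1 - a ^ 2) ^ 4 * (1 - a ^ 4) := by positivity
  calc 8 * S₂ ^ 2 * S₄ * ((n:ℝ) * (1 - a ^ 4) ^ 2 * (1 - a ^ 2) ^ 4)
      = (S₂ ^ 2 * S₄ * (n:ℝ) * (1 - a ^ 2) ^ 4 * (1 - a ^ 4)) * (8 * (1 - a ^ 4)) := by ring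
    _ ≤ (S₂ ^ 2 * S₄ * (n:ℝ) * (1 - a ^ 2) ^ 4 * (1 - a ^ 4)) * (24 * (1 - a ^ 2)) :=
        mul_le_mul_of_nonneg_left h84 hC0
    _ = 24 * S₂ ^ 2 * S₄ * ((n:ℝ) * (1 - a ^ 2) ^ 5 * (1 - a ^ 4)) := by ring
end

section
/- For every n ≥ 1, | E[Q_n] − 2σ²/(1 − a₁²) | ≤ 2σ² / ((1 − a₁²)² n). -/
/-!
The noise `ξ_k = Z_k² - 1` is centred with variance `E[Z⁴] - 1 = 2`, the fourth moment coming from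
Gaussian integration by parts `E[Z^(n+2)] = (n+1) E[Z^n]`. As the `ξ_k` are independent,
`E[Ỹ_i²] = 2σ² Σ_{j<i} a₁^(2j) = 2σ² (1 - a₁^(2i)) / (1 - a₁²)`. Averaging over `i ≤ n`, the bias of
`E[Q_n]` is `-2σ² / ((1 - a₁²) n) · Σ_{i=1}^n a₁^(2i)`, and this geometric sum is at most
`1 / (1 - a₁²)`.
-/

open MeasureTheory ProbabilityTheory Real Finset

lemma sum_geom_sum_mul_one_sub (r : ℝ) (n : ℕ) :
    (∑ i ∈ Icc 1 n, ∑ j ∈ range i, r ^ j) * (1 - r) = n - ∑ i ∈ Icc 1 n, r ^ i := by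
  rw [sum_mul]
  simp_rw [geom_sum_mul_neg]
  rw [sum_sub_distrib]
  simp

lemma abs_one_div_mul_sum_geom_sum_sub_le {r : ℝ} (hr0 : 0 ≤ r) (hr1 : r < 1) {n : ℕ} (hn : 1 ≤ n) :
    |1 / (n : ℝ) * ∑ i ∈ Icc 1 n, ∑ j ∈ range i, r ^ j - 1 / (1 - r)|
      ≤ 1 / ((1 - r) ^ 2 * n) := by
  have h1r : 0 < 1 - r := sub_pos.2 hr1
  have hn' : (0 : ℝ) < n := by exact_mod_cast hn
  set S := ∑ i ∈ Icc 1 n, r ^ i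
  have hS0 : 0 ≤ S := sum_nonneg fun i _ => pow_nonneg hr0 i
  have hS1 : S ≤ 1 / (1 - r) :=
    calc S = ∑ i ∈ Ico 1 (n + 1), r ^ i := by rw [Ico_add_one_right_eq_Icc]
      _ ≤ r ^ 1 / (1 - r) := geom_sum_Ico_le_of_lt_one hr0 hr1
      _ ≤ 1 / (1 - r) := by gcongr; linarith
  have hdiff : 1 / (n : ℝ) * ∑ i ∈ Icc 1 n, ∑ j ∈ range i, r ^ j - 1 / (1 - r)
      = -(S / ((1 - r) * n)) := by
    rw [eq_div_of_mul_eq h1r.ne' (sum_geom_sum_mul_one_sub r n)]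
    field_simp
    ring
  rw [hdiff, abs_neg, abs_of_nonneg (by positivity)]
  calc S / ((1 - r) * n) ≤ 1 / (1 - r) / ((1 - r) * n) := by gcongr
    _ = 1 / ((1 - r) ^ 2 * n) := by field_simp

lemma sum_Icc_one_sub_eq_sum_range {M : Type*} [AddCommMonoid M] (f : ℕ → M) (i : ℕ) :
    ∑ k ∈ Icc 1 i, f (i - k) = ∑ j ∈ range i, f j :=
  sum_nbij' (i - ·) (i - ·) (by simp; omega) (by simp; omega) (by simp; omega) (by simp; omega)
    fun _ _ => rfl

namespace ProbabilityTheory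

lemma integrable_pow_gaussianReal (μ : ℝ) (v : NNReal) (n : ℕ) :
    Integrable (fun x => x ^ n) (gaussianReal μ v) :=
  (memLp_id_gaussianReal n).integrable_norm_pow'.mono' (by fun_prop) (by simp)

lemma integrable_gaussianPDFReal_mul_pow (μ : ℝ) {v : NNReal} (hv : v ≠ 0) (n : ℕ) :
    Integrable (fun x => gaussianPDFReal μ v x * x ^ n) := by
  have := integrable_pow_gaussianReal μ v n
  rw [gaussianReal_of_var_ne_zero μ hv, gaussianPDF_def,
    integrable_withDensity_iff_integrable_smul' (by fun_prop) (by simp)] at this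
  simpa [ENNReal.toReal_ofReal (gaussianPDFReal_nonneg μ v _)] using this

lemma hasDerivAt_gaussianPDFReal (x : ℝ) :
    HasDerivAt (gaussianPDFReal 0 1) (-x * gaussianPDFReal 0 1 x) x := by
  have h : HasDerivAt (fun y : ℝ => -(y - 0) ^ 2 / (2 * ((1 : NNReal) : ℝ))) (-x) x :=
    ((((hasDerivAt_id' x).sub_const 0).fun_pow 2).fun_neg.div_const _).congr_deriv (by simp; ring)
  exact (h.exp.const_mul _).congr_deriv (by simp only [gaussianPDFReal]; ring)

lemma integral_pow_add_two_gaussianReal (n : ℕ) :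
    ∫ x, x ^ (n + 2) ∂gaussianReal 0 1 = (n + 1) * ∫ x, x ^ n ∂gaussianReal 0 1 := by
  have hint := integrable_gaussianPDFReal_mul_pow 0 one_ne_zero
  have hderiv (x : ℝ) : HasDerivAt (fun x => gaussianPDFReal 0 1 x * x ^ (n + 1))
      ((n + 1) * (gaussianPDFReal 0 1 x * x ^ n) - gaussianPDFReal 0 1 x * x ^ (n + 2)) x := by
    refine ((hasDerivAt_gaussianPDFReal x).fun_mul (hasDerivAt_pow (n + 1) x)).congr_deriv ?_
    push_cast
    ring
  have h := integral_eq_zero_of_hasDerivAt_of_integrable hderiv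
    (((hint n).const_mul _).sub (hint (n + 2))) (hint (n + 1))
  rw [integral_sub ((hint n).const_mul _) (hint (n + 2)), integral_const_mul, sub_eq_zero] at h
  simp only [integral_gaussianReal_eq_integral_smul one_ne_zero, smul_eq_mul]
  exact h.symm

lemma integral_sq_gaussianReal : ∫ x, x ^ 2 ∂gaussianReal 0 1 = 1 := by
  simpa using integral_pow_add_two_gaussianReal 0

lemma integral_pow_four_gaussianReal : ∫ x, x ^ 4 ∂gaussianReal 0 1 = 3 := by
  rw [integral_pow_add_two_gaussianReal 2, integral_sq_gaussianReal]; norm_num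

lemma memLp_sq_gaussianReal (μ : ℝ) (v : NNReal) : MemLp (fun x => x ^ 2) 2 (gaussianReal μ v) :=
  (memLp_two_iff_integrable_sq (by fun_prop)).2 <| by
    simpa only [← pow_mul] using integrable_pow_gaussianReal μ v 4

lemma variance_sq_gaussianReal : Var[fun x => x ^ 2; gaussianReal 0 1] = 2 := by
  rw [variance_eq_sub (memLp_sq_gaussianReal 0 1)]
  simp_rw [Pi.pow_apply, ← pow_mul]
  rw [integral_pow_four_gaussianReal, integral_sq_gaussianReal]
  norm_num

section StandardGaussian

variable {Ω : Type*} [MeasurableSpace Ω] {P : Measure Ω} {Z : Ω → ℝ}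

lemma HasLaw.memLp_sq_sub_one (hZ : HasLaw Z (gaussianReal 0 1) P) :
    MemLp (fun ω => Z ω ^ 2 - 1) 2 P := by
  have h := (memLp_sq_gaussianReal 0 1).sub (memLp_const 1)
  rw [← hZ.map_eq] at h
  exact h.comp_of_map hZ.aemeasurable

lemma HasLaw.integral_sq_sub_one (hZ : HasLaw Z (gaussianReal 0 1) P) :
    ∫ ω, (Z ω ^ 2 - 1) ∂P = 0 := by
  rw [← Function.comp_def (fun x => x ^ 2 - 1) Z, hZ.integral_comp (by fun_prop),
    integral_sub (integrable_pow_gaussianReal 0 1 2) (integrable_const 1),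
    integral_sq_gaussianReal]
  simp

lemma HasLaw.variance_sq_sub_one (hZ : HasLaw Z (gaussianReal 0 1) P) :
    Var[fun ω => Z ω ^ 2 - 1; P] = 2 := by
  rw [← Function.comp_def (fun x => x ^ 2 - 1) Z, ← variance_map (by fun_prop) hZ.aemeasurable,
    hZ.map_eq, variance_sub_const (by fun_prop), variance_sq_gaussianReal]

end StandardGaussian

lemma integral_sq_sum_eq_sum_variance {Ω ι : Type*} [MeasurableSpace Ω] {P : Measure Ω}
    [IsProbabilityMeasure P] {ξ : ι → Ω → ℝ} {s : Finset ι} (c : ι → ℝ)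
    (hξ : ∀ i ∈ s, MemLp (ξ i) 2 P) (hmean : ∀ i ∈ s, ∫ ω, ξ i ω ∂P = 0)
    (hindep : Set.Pairwise s fun i j => ξ i ⟂ᵢ[P] ξ j) :
    ∫ ω, (∑ i ∈ s, c i * ξ i ω) ^ 2 ∂P = ∑ i ∈ s, c i ^ 2 * Var[ξ i; P] := by
  have hcξ : ∀ i ∈ s, MemLp (fun ω => c i * ξ i ω) 2 P := fun i hi => (hξ i hi).const_mul _
  have hvar := IndepFun.variance_sum hcξ fun i hi j hj hij =>
    (hindep hi hj hij).comp (measurable_const_mul (c i)) (measurable_const_mul (c j))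
  have hmean_sum : ∫ ω, ∑ i ∈ s, c i * ξ i ω ∂P = 0 := by
    rw [integral_finsetSum s fun i hi => (hcξ i hi).integrable one_le_two]
    exact sum_eq_zero fun i hi => by rw [integral_const_mul, hmean i hi, mul_zero]
  calc ∫ ω, (∑ i ∈ s, c i * ξ i ω) ^ 2 ∂P = Var[fun ω => ∑ i ∈ s, c i * ξ i ω; P] := by
        rw [variance_eq_sub (memLp_finsetSum s hcξ), hmean_sum]
        simp
    _ = ∑ i ∈ s, Var[fun ω => c i * ξ i ω; P] := by
        rw [← hvar]
        congr 1
        ext ω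
        simp
    _ = ∑ i ∈ s, c i ^ 2 * Var[ξ i; P] := by simp_rw [variance_const_mul]

section ChiSquaredAR

variable {Ω : Type*} [MeasurableSpace Ω] {P : Measure Ω} {Z : ℕ → Ω → ℝ}

lemma memLp_sum_pow_mul_sq_sub_one (hZ : ∀ k, HasLaw (Z k) (gaussianReal 0 1) P) (σ a : ℝ)
    (i : ℕ) : MemLp (fun ω => ∑ k ∈ Icc 1 i, a ^ (i - k) * (σ * (Z k ω ^ 2 - 1))) 2 P :=
  memLp_finsetSum _ fun k _ => ((hZ k).memLp_sq_sub_one.const_mul σ).const_mul _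

lemma integral_sq_sum_pow_mul_sq_sub_one [IsProbabilityMeasure P]
    (hZ : ∀ k, HasLaw (Z k) (gaussianReal 0 1) P) (hindep : iIndepFun Z P) (σ a : ℝ) (i : ℕ) :
    ∫ ω, (∑ k ∈ Icc 1 i, a ^ (i - k) * (σ * (Z k ω ^ 2 - 1))) ^ 2 ∂P
      = 2 * σ ^ 2 * ∑ j ∈ range i, (a ^ 2) ^ j := by
  have hφ : Measurable fun x : ℝ => x ^ 2 - 1 := by fun_prop
  simp_rw [← mul_assoc]
  rw [integral_sq_sum_eq_sum_variance _ (fun k _ => (hZ k).memLp_sq_sub_one)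
    (fun k _ => (hZ k).integral_sq_sub_one)
    (fun k _ l _ hkl => (hindep.indepFun hkl).comp hφ hφ)]
  rw [← sum_Icc_one_sub_eq_sum_range (fun j => (a ^ 2) ^ j), mul_sum]
  refine sum_congr rfl fun k _ => ?_
  rw [(hZ k).variance_sq_sub_one]
  ring

end ChiSquaredAR

end ProbabilityTheory

theorem stmt_15_general
    {Ω : Type*} [MeasurableSpace Ω] (P : Measure Ω) [IsProbabilityMeasure P]
    (Z : ℕ → Ω → ℝ)
    (hindep : iIndepFun Z P)
    (hgauss : ∀ k, Measure.map (Z k) P = gaussianReal 0 1)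
    (σ : ℝ) (a₁ : ℝ) (ha₁ : |a₁| < 1)
    (Y : ℕ → Ω → ℝ)
    (hY : ∀ i ω, Y i ω = ∑ k ∈ Finset.Icc 1 i, a₁ ^ (i - k) * (σ * ((Z k ω) ^ 2 - 1)))
    (Q : ℕ → Ω → ℝ) (hQ : ∀ n ω, Q n ω = (1 / (n : ℝ)) * ∑ i ∈ Finset.Icc 1 n, (Y i ω) ^ 2) :
    ∀ n : ℕ, 1 ≤ n →
      |(∫ ω, Q n ω ∂P) - 2 * σ ^ 2 / (1 - a₁ ^ 2)| ≤ 2 * σ ^ 2 / ((1 - a₁ ^ 2) ^ 2 * n) := by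
  intro n hn
  have hlaw k : HasLaw (Z k) (gaussianReal 0 1) P :=
    ⟨.of_map_ne_zero (hgauss k ▸ IsProbabilityMeasure.ne_zero _), hgauss k⟩
  have hY_sq_int i : Integrable (fun ω => Y i ω ^ 2) P := by
    simp_rw [hY]
    exact (memLp_sum_pow_mul_sq_sub_one hlaw σ a₁ i).integrable_sq
  have hY_sq i : ∫ ω, Y i ω ^ 2 ∂P = 2 * σ ^ 2 * ∑ j ∈ range i, (a₁ ^ 2) ^ j := by
    simp_rw [hY]
    exact integral_sq_sum_pow_mul_sq_sub_one hlaw hindep σ a₁ i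
  have hQ_mean : ∫ ω, Q n ω ∂P
      = 2 * σ ^ 2 * (1 / (n : ℝ) * ∑ i ∈ Icc 1 n, ∑ j ∈ range i, (a₁ ^ 2) ^ j) := by
    simp_rw [hQ]
    rw [integral_const_mul, integral_finsetSum _ fun i _ => hY_sq_int i]
    simp_rw [hY_sq, ← mul_sum]
    ring
  rw [hQ_mean, ← mul_one_div (2 * σ ^ 2), ← mul_one_div (2 * σ ^ 2), ← mul_sub, abs_mul,
    abs_of_nonneg (by positivity)]
  exact mul_le_mul_of_nonneg_left (abs_one_div_mul_sum_geom_sum_sub_le (sq_nonneg a₁)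
    ((sq_lt_one_iff_abs_lt_one a₁).2 ha₁) hn) (by positivity)

/-- Bias of the quadratic variation of the chi-squared-noise AR(1) process:
`|E[Q_n] − 2σ²/(1 − a₁²)| ≤ 2σ²/((1 − a₁²)² n)`. -/
theorem stmt_15
    {Ω : Type*} [MeasurableSpace Ω] (P : Measure Ω) [IsProbabilityMeasure P]
    (Z : ℕ → Ω → ℝ) (hmeas : ∀ k, Measurable (Z k))
    (hindep : iIndepFun Z P)
    (hgauss : ∀ k, Measure.map (Z k) P = gaussianReal 0 1)
    (σ : ℝ) (hσ : 0 < σ) (a₁ : ℝ) (ha₁ : |a₁| < 1)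
    (Y : ℕ → Ω → ℝ)
    (hY : ∀ i ω, Y i ω = ∑ k ∈ Finset.Icc 1 i, a₁ ^ (i - k) * (σ * ((Z k ω) ^ 2 - 1)))
    (Q : ℕ → Ω → ℝ) (hQ : ∀ n ω, Q n ω = (1 / (n : ℝ)) * ∑ i ∈ Finset.Icc 1 n, (Y i ω) ^ 2) :
    ∀ n : ℕ, 1 ≤ n →
      |(∫ ω, Q n ω ∂P) - 2 * σ ^ 2 / (1 - a₁ ^ 2)| ≤ 2 * σ ^ 2 / ((1 - a₁ ^ 2) ^ 2 * n) :=
  stmt_15_general P Z hindep hgauss σ a₁ ha₁ Y hY Q hQ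
end
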